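/- Under the hypotheses of the main predictability theorem, the convergence sup_t |ŷ_d(t) − y(t)| → 0 is uniform over the class of x with ∫ e^{r|ω|}|X(iω)|² dω ≤ 1: for every ε > 0 there exists D such that for all d ≥ D and all such x, sup_t |ŷ_d(t) − y(t)| ≤ ε. -/

import Mathlib

open MeasureTheory Filter Set

section Aux

lemma aux_amgm (l a b : ℝ) (hl : 0 < l) : a * b ≤ (l * a ^ 2 + b ^ 2 / l) / 2 := by
  have h2 : l * (2 * (a * b)) ≤ l * (l * a ^ 2 + b ^ 2 / l) := by
    have h3 : l * (l * a ^ 2 + b ^ 2 / l) = (l * a) ^ 2 + b ^ 2 := by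
      field_simp
    rw [h3]; nlinarith [sq_nonneg (l * a - b)]
  have := le_of_mul_le_mul_left h2 hl
  linarith

lemma aux_exp_abs {a : ℝ} (ha : 0 < a) :
    Integrable (fun x : ℝ => Real.exp (-(a * |x|))) := by
  set f : ℝ → ℝ := fun x => Real.exp (-(a * |x|)) with hf
  have hfc : Continuous f := by continuity
  have h1 : IntegrableOn f (Ici 0) := by
    refine (integrableOn_Ici_iff_integrableOn_Ioi).mpr ?_
    refine (exp_neg_integrableOn_Ioi 0 ha).congr_fun ?_ measurableSet_Ioi
    intro x hx
    simp only [f, abs_of_pos (mem_Ioi.mp hx), neg_mul]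
  have hind : Integrable ((Ici (0:ℝ)).indicator f) :=
    (integrable_indicator_iff measurableSet_Ici).mpr h1
  have h2 : Integrable ((Iic (0:ℝ)).indicator f) := by
    have := hind.comp_neg
    refine this.congr ?_
    refine Eventually.of_forall fun x => ?_
    by_cases hx : x ≤ 0
    · simp [Set.indicator, hx, neg_nonneg.mpr hx, f, abs_neg]
    · simp [Set.indicator, hx, fun h => hx (neg_nonneg.mp h), f]
  have h3 : IntegrableOn f (Iic 0) := (integrable_indicator_iff measurableSet_Iic).mp h2
  have : IntegrableOn f (Iic 0 ∪ Ici 0) := h3.union h1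
  rwa [Set.Iic_union_Ici, integrableOn_univ] at this

lemma aux_poly_growth (c : ℝ) (hc : 0 < c) (P : Polynomial ℂ) :
    ∃ M : ℝ, 0 ≤ M ∧ ∀ ω : ℝ, ‖P.eval (Complex.I * ω)‖ ≤ M * Real.exp (c * |ω|) := by
  refine ⟨∑ i ∈ Finset.range (P.natDegree + 1),
      ‖P.coeff i‖ * (i.factorial / c ^ i), ?_, ?_⟩
  · refine Finset.sum_nonneg fun i _ => ?_
    positivity
  · intro ω
    rw [Polynomial.eval_eq_sum_range, Finset.sum_mul]
    refine (norm_sum_le _ _).trans (Finset.sum_le_sum fun i _ => ?_)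
    have hz : ‖(Complex.I * (ω:ℂ)) ^ i‖ = |ω| ^ i := by
      rw [norm_pow, norm_mul, Complex.norm_I, one_mul, Complex.norm_real, Real.norm_eq_abs]
    rw [norm_mul, hz]
    have h2 : (c * |ω|) ^ i / i.factorial ≤ Real.exp (c * |ω|) :=
      Real.pow_div_factorial_le_exp (x := c * |ω|) (by positivity) i
    have h3 : |ω| ^ i ≤ i.factorial / c ^ i * Real.exp (c * |ω|) := by
      rw [div_le_iff₀ (by positivity)] at h2
      rw [div_mul_eq_mul_div, le_div_iff₀ (by positivity : (0:ℝ) < c ^ i)]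
      calc |ω| ^ i * c ^ i = (c * |ω|) ^ i := by rw [mul_pow]; ring
        _ ≤ Real.exp (c * |ω|) * i.factorial := h2
        _ = i.factorial * Real.exp (c * |ω|) := by ring
    calc ‖P.coeff i‖ * |ω| ^ i ≤ ‖P.coeff i‖ * (i.factorial / c ^ i * Real.exp (c * |ω|)) :=
          mul_le_mul_of_nonneg_left h3 (norm_nonneg _)
      _ = ‖P.coeff i‖ * (i.factorial / c ^ i) * Real.exp (c * |ω|) := by ring

lemma aux_norm_exp_I (a b : ℝ) : ‖Complex.exp (Complex.I * a * b)‖ = 1 := by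
  rw [Complex.norm_exp]
  simp [Complex.mul_re]

lemma aux_norm_exp_I' (a b : ℝ) : ‖Complex.exp (-(Complex.I * a * b))‖ = 1 := by
  rw [Complex.norm_exp]
  simp [Complex.mul_re]

end Aux

set_option maxHeartbeats 1000000 in
/-- Uniform predictability over the class of processes with exponentially
weighted spectral norm at most `1`: the uniform prediction error bound holds
with a threshold `D` independent of the process. -/
theorem predictability_uniform
    (r θ T : ℝ) (hr : 0 < r) (hθ : 0 ≤ θ) (hT : 0 < T)
    (h : ℝ → ℝ) (hsm : ContDiff ℝ (⊤ : ℕ∞) h)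
    (hsupp : ∀ t : ℝ, t ∉ Set.Icc (-θ) T → h t = 0)
    (H : ℝ → ℂ)
    (hH : ∀ ω : ℝ, H ω = ∫ t : ℝ, Complex.exp (-(Complex.I * ω * t)) * (h t : ℂ))
    (ψ : ℕ → Polynomial ℂ)
    (hψ : Tendsto (fun d : ℕ => ∫ ω : ℝ,
        Real.exp (-r * |ω|) *
          ‖(ψ d).eval (Complex.I * ω) - Complex.exp (Complex.I * T * ω)‖ ^ 2)
        atTop (nhds 0)) :
    ∀ ε : ℝ, 0 < ε → ∃ D : ℕ, ∀ d : ℕ, D ≤ d →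
      ∀ X : ℝ → ℂ, Measurable X →
        Integrable (fun ω : ℝ => Real.exp (r * |ω|) * ‖X ω‖ ^ 2) →
        (∫ ω : ℝ, Real.exp (r * |ω|) * ‖X ω‖ ^ 2) ≤ 1 →
        ∀ t : ℝ,
          ‖(1 / (2 * Real.pi)) *
              (∫ ω : ℝ, Complex.exp (Complex.I * ω * t) *
                (Complex.exp (-(Complex.I * T * ω)) * (ψ d).eval (Complex.I * ω) *
                  H ω * X ω)) -
            (1 / (2 * Real.pi)) *
              (∫ ω : ℝ, Complex.exp (Complex.I * ω * t) * (H ω * X ω))‖ ≤ ε := by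
  have hπ : 0 < Real.pi := Real.pi_pos
  -- basic facts about h and H
  have hhc : Continuous h := hsm.continuous
  have hhsupp : HasCompactSupport h := HasCompactSupport.intro isCompact_Icc hsupp
  have hint_h : Integrable h := hhc.integrable_of_hasCompactSupport hhsupp
  set C : ℝ := ∫ s : ℝ, |h s| with hCdef
  have hC0 : 0 ≤ C := by
    rw [hCdef]; exact integral_nonneg fun s => abs_nonneg _
  have hnormeq : ∀ ω s : ℝ, ‖Complex.exp (-(Complex.I * ω * s)) * (h s : ℂ)‖ = |h s| := by
    intro ω s
    rw [norm_mul, aux_norm_exp_I', one_mul, Complex.norm_real, Real.norm_eq_abs]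
  have hHb : ∀ ω : ℝ, ‖H ω‖ ≤ C := by
    intro ω
    rw [hH ω, hCdef]
    refine (norm_integral_le_integral_norm _).trans ?_
    exact le_of_eq (integral_congr_ae (Eventually.of_forall fun s => hnormeq ω s))
  have hHcont : Continuous H := by
    have hc : Continuous fun ω : ℝ => ∫ s : ℝ, Complex.exp (-(Complex.I * ω * s)) * (h s : ℂ) := by
      refine continuous_of_dominated (bound := fun s => |h s|) ?_ ?_ hint_h.abs ?_
      · intro ω
        exact ((Complex.continuous_exp.comp
            ((continuous_const.mul Complex.continuous_ofReal).neg)).mul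
          (Complex.continuous_ofReal.comp hhc)).aestronglyMeasurable
      · intro ω
        exact Eventually.of_forall fun s => le_of_eq (hnormeq ω s)
      · exact Eventually.of_forall fun s =>
          (Complex.continuous_exp.comp
            (((continuous_const.mul Complex.continuous_ofReal).mul
              continuous_const).neg)).mul continuous_const
    exact hc.congr fun ω => (hH ω).symm
  intro ε hε
  -- choose constants
  set l : ℝ := C / (Real.pi * ε) + 1 with hldef
  have hl : 0 < l := by rw [hldef]; positivity
  set ε' : ℝ := Real.pi * ε / (C * l + 1) with hε'def
  have hCl0 : 0 ≤ C * l := mul_nonneg hC0 hl.le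
  have hε' : 0 < ε' := by rw [hε'def]; positivity
  -- key numeric facts
  have hnum1 : C * l * ε' ≤ Real.pi * ε := by
    rw [hε'def, ← mul_div_assoc]
    rw [div_le_iff₀ (by positivity : (0:ℝ) < C * l + 1)]
    nlinarith [mul_pos hπ hε]
  have hnum2 : C / l ≤ Real.pi * ε := by
    rw [div_le_iff₀ hl]
    have h5 : Real.pi * ε * l = C + Real.pi * ε := by
      rw [hldef]
      field_simp
    rw [h5]; nlinarith [mul_pos hπ hε]
  clear_value C l ε'
  -- choose D from the convergence hypothesis
  obtain ⟨D, hD⟩ := Metric.tendsto_atTop.mp hψ ε' hε'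
  refine ⟨D, fun d hd X hX hVint hV1 t => ?_⟩
  set P : ℝ → ℂ := fun ω => (ψ d).eval (Complex.I * ω) with hPdef
  have hPcont : Continuous P := ((ψ d).continuous).comp
    (continuous_const.mul Complex.continuous_ofReal)
  set e : ℝ → ℂ := fun ω => Complex.exp (Complex.I * T * ω) with hedef
  have hecont : Continuous e := by
    rw [hedef]
    exact Complex.continuous_exp.comp (continuous_const.mul Complex.continuous_ofReal)
  set U : ℝ → ℝ := fun ω => Real.exp (-r * |ω|) * ‖P ω - e ω‖ ^ 2 with hUdef
  set V : ℝ → ℝ := fun ω => Real.exp (r * |ω|) * ‖X ω‖ ^ 2 with hVdef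
  set α : ℝ := ∫ ω : ℝ, U ω with hαdef
  have hα : α ≤ ε' := by
    have h1 := hD d hd
    rw [Real.dist_eq, sub_zero] at h1
    have h2 : α = ∫ ω : ℝ, Real.exp (-r * |ω|) *
        ‖(ψ d).eval (Complex.I * ω) - Complex.exp (Complex.I * T * ω)‖ ^ 2 := by
      simp only [hαdef, hUdef, hPdef, hedef]
    rw [h2]
    exact (le_abs_self _).trans h1.le
  -- polynomial growth bound
  obtain ⟨M, hM0, hM⟩ := aux_poly_growth (r / 4) (by positivity) (ψ d)
  have hM' : ∀ ω : ℝ, ‖P ω‖ ≤ M * Real.exp (r / 4 * |ω|) := by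
    intro ω; rw [hPdef]; exact hM ω
  -- integrability of U
  have hUcont : Continuous U := by
    rw [hUdef]
    refine Continuous.mul
      (Real.continuous_exp.comp (continuous_const.mul continuous_abs)) ?_
    exact (Continuous.norm (hPcont.sub hecont)).pow 2
  have hUint : Integrable U := by
    refine Integrable.mono' ((aux_exp_abs (a := r / 2) (by positivity)).const_mul
      ((M + 1) ^ 2)) hUcont.aestronglyMeasurable ?_
    refine Eventually.of_forall fun ω => ?_
    have hU0 : 0 ≤ U ω := by rw [hUdef]; positivity
    rw [Real.norm_eq_abs, abs_of_nonneg hU0]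
    have he1 : ‖e ω‖ = 1 := aux_norm_exp_I T ω
    have hPe : ‖P ω - e ω‖ ≤ (M + 1) * Real.exp (r / 4 * |ω|) := by
      refine (norm_sub_le _ _).trans ?_
      rw [he1]
      have h1 : (1:ℝ) ≤ Real.exp (r / 4 * |ω|) := Real.one_le_exp (by positivity)
      nlinarith [hM' ω]
    have hsq : ‖P ω - e ω‖ ^ 2 ≤ (M + 1) ^ 2 * Real.exp (r / 4 * |ω|) ^ 2 := by
      calc ‖P ω - e ω‖ ^ 2 ≤ ((M + 1) * Real.exp (r / 4 * |ω|)) ^ 2 :=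
            pow_le_pow_left₀ (norm_nonneg _) hPe 2
        _ = (M + 1) ^ 2 * Real.exp (r / 4 * |ω|) ^ 2 := by ring
    have hexpeq : Real.exp (-r * |ω|) * Real.exp (r / 4 * |ω|) ^ 2 =
        Real.exp (-(r / 2 * |ω|)) := by
      rw [pow_two, ← Real.exp_add, ← Real.exp_add]
      congr 1; ring
    calc U ω ≤ Real.exp (-r * |ω|) * ((M + 1) ^ 2 * Real.exp (r / 4 * |ω|) ^ 2) := by
          rw [hUdef]
          exact mul_le_mul_of_nonneg_left hsq (Real.exp_nonneg _)
      _ = (M + 1) ^ 2 * (Real.exp (-r * |ω|) * Real.exp (r / 4 * |ω|) ^ 2) := by ring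
      _ = (M + 1) ^ 2 * Real.exp (-(r / 2 * |ω|)) := by rw [hexpeq]
  -- AM-GM bound on ‖X ω‖ weighted quantities
  have hXbound : ∀ ω : ℝ, Real.exp (r / 4 * |ω|) * ‖X ω‖ ≤
      (Real.exp (-(r / 2 * |ω|)) + V ω) / 2 := by
    intro ω
    have key := aux_amgm 1 (Real.exp (-(r / 4) * |ω|)) (Real.exp (r / 2 * |ω|) * ‖X ω‖)
      one_pos
    have hab : Real.exp (-(r / 4) * |ω|) * (Real.exp (r / 2 * |ω|) * ‖X ω‖) =
        Real.exp (r / 4 * |ω|) * ‖X ω‖ := by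
      rw [← mul_assoc, ← Real.exp_add]
      congr 2; ring
    have ha2 : Real.exp (-(r / 4) * |ω|) ^ 2 = Real.exp (-(r / 2 * |ω|)) := by
      rw [pow_two, ← Real.exp_add]; congr 1; ring
    have hb2 : (Real.exp (r / 2 * |ω|) * ‖X ω‖) ^ 2 = V ω := by
      rw [hVdef, mul_pow, pow_two (Real.exp _), ← Real.exp_add]
      congr 2; ring
    rw [hab, one_mul, ha2, hb2, div_one] at key
    exact key
  -- the two integrands
  set f : ℝ → ℂ := fun ω => Complex.exp (Complex.I * ω * t) *
    (Complex.exp (-(Complex.I * T * ω)) * P ω * H ω * X ω) with hfdef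
  set g : ℝ → ℂ := fun ω => Complex.exp (Complex.I * ω * t) * (H ω * X ω) with hgdef
  have hXm : AEStronglyMeasurable X volume := hX.aestronglyMeasurable
  have hexpm : Continuous fun ω : ℝ => Complex.exp (Complex.I * ω * t) :=
    Complex.continuous_exp.comp
      ((continuous_const.mul Complex.continuous_ofReal).mul continuous_const)
  have hexpm2 : Continuous fun ω : ℝ => Complex.exp (-(Complex.I * T * ω)) :=
    Complex.continuous_exp.comp
      ((continuous_const.mul Complex.continuous_ofReal).neg)
  -- integrability of the dominating functions
  have hdom : Integrable (fun ω : ℝ => (Real.exp (-(r / 2 * |ω|)) + V ω) / 2) := by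
    have h1 : Integrable (fun ω : ℝ => Real.exp (-(r / 2 * |ω|))) :=
      aux_exp_abs (a := r / 2) (by positivity)
    exact (h1.add hVint).div_const 2
  -- integrability of g
  have hg : Integrable g := by
    refine Integrable.mono' (hdom.const_mul C)
      (hexpm.aestronglyMeasurable.mul (hHcont.aestronglyMeasurable.mul hXm)) ?_
    refine Eventually.of_forall fun ω => ?_
    have h1 : ‖g ω‖ = ‖H ω‖ * ‖X ω‖ := by
      rw [hgdef]
      rw [norm_mul, aux_norm_exp_I ω t, one_mul, norm_mul]
    rw [h1]
    have h2 : ‖H ω‖ * ‖X ω‖ ≤ C * ‖X ω‖ :=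
      mul_le_mul_of_nonneg_right (hHb ω) (norm_nonneg _)
    refine h2.trans ?_
    have h3 : ‖X ω‖ ≤ (Real.exp (-(r / 2 * |ω|)) + V ω) / 2 := by
      have h4 := hXbound ω
      have h5 : (1:ℝ) ≤ Real.exp (r / 4 * |ω|) := Real.one_le_exp (by positivity)
      nlinarith [norm_nonneg (X ω)]
    exact mul_le_mul_of_nonneg_left h3 hC0
  -- integrability of f
  have hf : Integrable f := by
    refine Integrable.mono' (hdom.const_mul (C * M))
      (hexpm.aestronglyMeasurable.mul
        (((hexpm2.aestronglyMeasurable.mul hPcont.aestronglyMeasurable).mul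
          hHcont.aestronglyMeasurable).mul hXm)) ?_
    refine Eventually.of_forall fun ω => ?_
    have h1 : ‖f ω‖ = ‖P ω‖ * ‖H ω‖ * ‖X ω‖ := by
      rw [hfdef]
      rw [norm_mul, aux_norm_exp_I ω t, one_mul, norm_mul, norm_mul, norm_mul,
        aux_norm_exp_I' T ω, one_mul]
    rw [h1]
    calc ‖P ω‖ * ‖H ω‖ * ‖X ω‖ ≤ M * Real.exp (r / 4 * |ω|) * C * ‖X ω‖ := by
          refine mul_le_mul_of_nonneg_right ?_ (norm_nonneg _)
          exact mul_le_mul (hM' ω) (hHb ω) (norm_nonneg _) (by positivity)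
      _ = C * M * (Real.exp (r / 4 * |ω|) * ‖X ω‖) := by ring
      _ ≤ C * M * ((Real.exp (-(r / 2 * |ω|)) + V ω) / 2) :=
          mul_le_mul_of_nonneg_left (hXbound ω) (by positivity)
  -- pointwise bound on the difference
  have hptw : ∀ ω : ℝ, ‖f ω - g ω‖ ≤ C * l / 2 * U ω + C / (2 * l) * V ω := by
    intro ω
    have hfact : f ω - g ω = Complex.exp (Complex.I * ω * t) *
        ((Complex.exp (-(Complex.I * T * ω)) * P ω - 1) * (H ω * X ω)) := by
      rw [hfdef, hgdef]; ring
    have hunit : Complex.exp (-(Complex.I * T * ω)) * e ω = 1 := by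
      rw [hedef, ← Complex.exp_add]
      simp
    have hkey : Complex.exp (-(Complex.I * T * ω)) * P ω - 1 =
        Complex.exp (-(Complex.I * T * ω)) * (P ω - e ω) := by
      rw [mul_sub, hunit]
    have hnorm : ‖f ω - g ω‖ = ‖P ω - e ω‖ * (‖H ω‖ * ‖X ω‖) := by
      rw [hfact, norm_mul, aux_norm_exp_I ω t, one_mul, hkey, norm_mul, norm_mul,
        aux_norm_exp_I' T ω, one_mul, norm_mul]
    rw [hnorm]
    have h2 : ‖P ω - e ω‖ * (‖H ω‖ * ‖X ω‖) ≤ C * (‖P ω - e ω‖ * ‖X ω‖) := by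
      calc ‖P ω - e ω‖ * (‖H ω‖ * ‖X ω‖) = ‖H ω‖ * (‖P ω - e ω‖ * ‖X ω‖) := by ring
        _ ≤ C * (‖P ω - e ω‖ * ‖X ω‖) :=
            mul_le_mul_of_nonneg_right (hHb ω) (by positivity)
    refine h2.trans ?_
    have key := aux_amgm l (Real.exp (-(r / 2) * |ω|) * ‖P ω - e ω‖)
      (Real.exp (r / 2 * |ω|) * ‖X ω‖) hl
    have hab : Real.exp (-(r / 2) * |ω|) * ‖P ω - e ω‖ *
        (Real.exp (r / 2 * |ω|) * ‖X ω‖) = ‖P ω - e ω‖ * ‖X ω‖ := by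
      have h6 : Real.exp (-(r / 2) * |ω|) * Real.exp (r / 2 * |ω|) = 1 := by
        rw [← Real.exp_add]
        have : -(r / 2) * |ω| + r / 2 * |ω| = 0 := by ring
        rw [this, Real.exp_zero]
      calc Real.exp (-(r / 2) * |ω|) * ‖P ω - e ω‖ *
          (Real.exp (r / 2 * |ω|) * ‖X ω‖)
          = Real.exp (-(r / 2) * |ω|) * Real.exp (r / 2 * |ω|) *
            (‖P ω - e ω‖ * ‖X ω‖) := by ring
        _ = ‖P ω - e ω‖ * ‖X ω‖ := by rw [h6, one_mul]
    have ha2 : (Real.exp (-(r / 2) * |ω|) * ‖P ω - e ω‖) ^ 2 = U ω := by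
      rw [hUdef, mul_pow, pow_two (Real.exp _), ← Real.exp_add]
      congr 2; ring
    have hb2 : (Real.exp (r / 2 * |ω|) * ‖X ω‖) ^ 2 = V ω := by
      rw [hVdef, mul_pow, pow_two (Real.exp _), ← Real.exp_add]
      congr 2; ring
    rw [hab, ha2, hb2] at key
    have hfin : C * ((l * U ω + V ω / l) / 2) = C * l / 2 * U ω + C / (2 * l) * V ω := by
      field_simp
    calc C * (‖P ω - e ω‖ * ‖X ω‖) ≤ C * ((l * U ω + V ω / l) / 2) :=
          mul_le_mul_of_nonneg_left key hC0
      _ = C * l / 2 * U ω + C / (2 * l) * V ω := hfin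
  -- integral of the bound
  have hrhs_int : Integrable (fun ω : ℝ => C * l / 2 * U ω + C / (2 * l) * V ω) :=
    (hUint.const_mul _).add (hVint.const_mul _)
  have hnormint : ∫ ω : ℝ, ‖f ω - g ω‖ ≤ Real.pi * ε := by
    have hsum : ∫ ω : ℝ, (C * l / 2 * U ω + C / (2 * l) * V ω) =
        C * l / 2 * α + C / (2 * l) * ∫ ω : ℝ, V ω := by
      rw [integral_add (hUint.const_mul _) (hVint.const_mul _),
        integral_const_mul, integral_const_mul, hαdef]
    calc ∫ ω : ℝ, ‖f ω - g ω‖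
        ≤ ∫ ω : ℝ, (C * l / 2 * U ω + C / (2 * l) * V ω) :=
          integral_mono (hf.sub hg).norm hrhs_int hptw
      _ = C * l / 2 * α + C / (2 * l) * ∫ ω : ℝ, V ω := hsum
      _ ≤ C * l / 2 * ε' + C / (2 * l) * 1 :=
          add_le_add (mul_le_mul_of_nonneg_left hα (by positivity))
            (mul_le_mul_of_nonneg_left hV1 (by positivity))
      _ ≤ Real.pi * ε := by
          have e1 : C * l / 2 * ε' = C * l * ε' / 2 := by ring
          have e2 : C / (2 * l) * 1 = (C / l) / 2 := by
            rw [mul_one, mul_comm 2 l, ← div_div]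
          rw [e1, e2]
          linarith [hnum1, hnum2]

  -- conclusion
  have hcnorm : ‖(1 / (2 * (Real.pi:ℂ)))‖ = 1 / (2 * Real.pi) := by
    rw [norm_div, norm_one, norm_mul, Complex.norm_real, Real.norm_eq_abs, abs_of_pos hπ]
    norm_num
  have main : ‖(1 / (2 * (Real.pi:ℂ))) * (∫ ω : ℝ, f ω) -
      (1 / (2 * (Real.pi:ℂ))) * (∫ ω : ℝ, g ω)‖ ≤ ε := by
    rw [← mul_sub, ← integral_sub hf hg, norm_mul, hcnorm]
    calc 1 / (2 * Real.pi) * ‖∫ ω : ℝ, (f ω - g ω)‖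
        ≤ 1 / (2 * Real.pi) * (Real.pi * ε) := by
          refine mul_le_mul_of_nonneg_left ?_ (by positivity)
          exact (norm_integral_le_integral_norm _).trans hnormint
      _ = ε / 2 := by field_simp
      _ ≤ ε := by linarith
  simpa only [hfdef, hgdef, hPdef] using main
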